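/- arXiv:math/0307321 — 9 statements merged into one kernel-verified Lean document; each statement's English description precedes it below -/
import Mathlib

section
/- Let G be a group and let S₁, S₂, S₃ ⊆ G satisfy the triple product property. Then for every permutation σ of {1,2,3}, the subsets S_{σ(1)}, S_{σ(2)}, S_{σ(3)} also satisfy the triple product property. Consequently, if G realizes ⟨n₁, n₂, n₃⟩ then it realizes ⟨n_{σ(1)}, n_{σ(2)}, n_{σ(3)}⟩ for every permutation σ of {1,2,3}. -/
/-- The right quotient set `Q(S) = {s₁s₂⁻¹ : s₁, s₂ ∈ S}` of a subset of a group. -/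
def rightQuotient {G : Type*} [Group G] (S : Set G) : Set G :=
  {g | ∃ s₁ ∈ S, ∃ s₂ ∈ S, g = s₁ * s₂⁻¹}

/-- Subsets `S₁, S₂, S₃` of a group satisfy the triple product property if whenever
`qᵢ ∈ Q(Sᵢ)` and `q₁q₂q₃ = 1`, we have `q₁ = q₂ = q₃ = 1`. -/
def TPP {G : Type*} [Group G] (S₁ S₂ S₃ : Set G) : Prop :=
  ∀ q₁ ∈ rightQuotient S₁, ∀ q₂ ∈ rightQuotient S₂, ∀ q₃ ∈ rightQuotient S₃,
    q₁ * q₂ * q₃ = 1 → q₁ = 1 ∧ q₂ = 1 ∧ q₃ = 1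

/-- A group `G` realizes `⟨n₁, n₂, n₃⟩` if there are finite subsets `Sᵢ ⊆ G` with
`|Sᵢ| = nᵢ` satisfying the triple product property. -/
def Realizes (G : Type*) [Group G] (n₁ n₂ n₃ : ℕ) : Prop :=
  ∃ S₁ S₂ S₃ : Set G, S₁.Finite ∧ S₂.Finite ∧ S₃.Finite ∧
    S₁.ncard = n₁ ∧ S₂.ncard = n₂ ∧ S₃.ncard = n₃ ∧ TPP S₁ S₂ S₃

lemma inv_mem_rightQuotient {G : Type*} [Group G] {S : Set G} {q : G}
    (h : q ∈ rightQuotient S) : q⁻¹ ∈ rightQuotient S := by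
  obtain ⟨s₁, hs₁, s₂, hs₂, rfl⟩ := h
  exact ⟨s₂, hs₂, s₁, hs₁, by group⟩

lemma TPP_cyc {G : Type*} [Group G] {S₁ S₂ S₃ : Set G} (h : TPP S₁ S₂ S₃) :
    TPP S₂ S₃ S₁ := by
  intro q₂ hq₂ q₃ hq₃ q₁ hq₁ heq
  have h1 : q₁ * q₂ * q₃ = 1 := by
    have hq : q₁ = (q₂ * q₃)⁻¹ := eq_inv_of_mul_eq_one_right heq
    subst hq; group
  obtain ⟨a, b, c⟩ := h q₁ hq₁ q₂ hq₂ q₃ hq₃ h1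
  exact ⟨b, c, a⟩

lemma TPP_rev {G : Type*} [Group G] {S₁ S₂ S₃ : Set G} (h : TPP S₁ S₂ S₃) :
    TPP S₃ S₂ S₁ := by
  intro q₃ hq₃ q₂ hq₂ q₁ hq₁ heq
  have h1 : q₁⁻¹ * q₂⁻¹ * q₃⁻¹ = 1 := by
    have := congrArg (·⁻¹) heq
    simp [mul_assoc] at this
    group
    rw [mul_assoc]
    simpa using this
  obtain ⟨a, b, c⟩ := h _ (inv_mem_rightQuotient hq₁) _ (inv_mem_rightQuotient hq₂)
    _ (inv_mem_rightQuotient hq₃) h1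
  refine ⟨?_, ?_, ?_⟩ <;> [skip; skip; skip]
  · exact inv_eq_one.mp c
  · exact inv_eq_one.mp b
  · exact inv_eq_one.mp a

lemma TPP_perm {G : Type*} [Group G] (σ : Equiv.Perm (Fin 3)) (S : Fin 3 → Set G)
    (h : TPP (S 0) (S 1) (S 2)) : TPP (S (σ 0)) (S (σ 1)) (S (σ 2)) := by
  fin_cases σ <;> simp_all <;>
    first
    | exact h
    | exact TPP_cyc h
    | exact TPP_cyc (TPP_cyc h)
    | exact TPP_rev h
    | exact TPP_rev (TPP_cyc h)
    | exact TPP_rev (TPP_cyc (TPP_cyc h))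

theorem stmt_0 {G : Type*} [Group G] (σ : Equiv.Perm (Fin 3)) :
    (∀ S : Fin 3 → Set G, TPP (S 0) (S 1) (S 2) → TPP (S (σ 0)) (S (σ 1)) (S (σ 2))) ∧
    (∀ n : Fin 3 → ℕ, Realizes G (n 0) (n 1) (n 2) →
      Realizes G (n (σ 0)) (n (σ 1)) (n (σ 2))) := by
  refine ⟨TPP_perm σ, ?_⟩
  rintro n ⟨S₁, S₂, S₃, hf₁, hf₂, hf₃, hc₁, hc₂, hc₃, htpp⟩
  set S : Fin 3 → Set G := ![S₁, S₂, S₃] with hS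
  have hfin : ∀ i, (S i).Finite := by
    intro i; fin_cases i <;> simpa [hS]
  have hcard : ∀ i, (S i).ncard = n i := by
    intro i; fin_cases i <;> simpa [hS]
  refine ⟨S (σ 0), S (σ 1), S (σ 2), hfin _, hfin _, hfin _,
    hcard _, hcard _, hcard _, TPP_perm σ S ?_⟩
  simpa [hS] using htpp
end

section
/- Let N be a normal subgroup of a group G. Suppose S₁, S₂, S₃ ⊆ N are finite subsets satisfying the triple product property with |Sᵢ| = nᵢ, and T₁, T₂, T₃ ⊆ G are finite subsets such that the quotient map G → G/N is injective on each Tᵢ, |Tᵢ| = mᵢ, and the images of T₁, T₂, T₃ in G/N satisfy the triple product property. Then the pointwise product sets S₁T₁, S₂T₂, S₃T₃ satisfy the triple product property in G and |SᵢTᵢ| = nᵢmᵢ; hence G realizes ⟨n₁m₁, n₂m₂, n₃m₃⟩. -/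
open Pointwise

/-!
Let `π : G → G/N`. An element of `Q(SᵢTᵢ)` has the form `s t t'⁻¹ s'⁻¹` with `s, s' ∈ N`, so its
image under `π` is `π t (π t')⁻¹ ∈ Q(π Tᵢ)`. A relation `q₁q₂q₃ = 1` in `G` therefore projects to
one in `G/N`, where the triple product property of the `π Tᵢ` forces `π t = π t'`; injectivity of
`π` on `Tᵢ` gives `t = t'`, so `qᵢ = s s'⁻¹ ∈ Q(Sᵢ)`, and the triple product property of the `Sᵢ`
finishes. The same injectivity shows that `(s, t) ↦ s t` is injective on `Sᵢ × Tᵢ`.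
-/

namespace MonoidHom

variable {G H : Type*} [Group G] [Group H] (f : G →* H) {S T : Set G}

lemma map_mem_rightQuotient_image (hS : S ⊆ f.ker) {q : G} (hq : q ∈ rightQuotient (S * T)) :
    f q ∈ rightQuotient (f '' T) := by
  obtain ⟨_, ⟨s, hs, t, ht, rfl⟩, _, ⟨s', hs', t', ht', rfl⟩, rfl⟩ := hq
  refine ⟨f t, ⟨t, ht, rfl⟩, f t', ⟨t', ht', rfl⟩, ?_⟩
  simp [f.mem_ker.mp (hS hs), f.mem_ker.mp (hS hs')]

lemma mem_rightQuotient_of_map_eq_one (hS : S ⊆ f.ker) (hT : Set.InjOn f T) {q : G}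
    (hq : q ∈ rightQuotient (S * T)) (hfq : f q = 1) : q ∈ rightQuotient S := by
  obtain ⟨_, ⟨s, hs, t, ht, rfl⟩, _, ⟨s', hs', t', ht', rfl⟩, rfl⟩ := hq
  have htt' : t = t' := hT ht ht' <| by
    simpa [f.mem_ker.mp (hS hs), f.mem_ker.mp (hS hs'), mul_inv_eq_one] using hfq
  subst htt'
  exact ⟨s, hs, s', hs', by group⟩

lemma injOn_mul_prod (hS : S ⊆ f.ker) (hT : Set.InjOn f T) :
    Set.InjOn (fun p : G × G => p.1 * p.2) (S ×ˢ T) := by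
  rintro ⟨s, t⟩ ⟨hs, ht⟩ ⟨s', t'⟩ ⟨hs', ht'⟩ (h : s * t = s' * t')
  have htt' : t = t' := hT ht ht' <| by
    simpa [f.mem_ker.mp (hS hs), f.mem_ker.mp (hS hs')] using congrArg f h
  subst htt'
  rw [mul_right_cancel h]

lemma ncard_mul (hS : S ⊆ f.ker) (hT : Set.InjOn f T) :
    (S * T).ncard = S.ncard * T.ncard := by
  rw [← Set.image_mul_prod, (f.injOn_mul_prod hS hT).ncard_image, Set.ncard_prod]

lemma tpp_mul {S₁ S₂ S₃ T₁ T₂ T₃ : Set G} (hS : TPP S₁ S₂ S₃)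
    (hT : TPP (f '' T₁) (f '' T₂) (f '' T₃))
    (hS₁ : S₁ ⊆ f.ker) (hS₂ : S₂ ⊆ f.ker) (hS₃ : S₃ ⊆ f.ker)
    (hT₁ : Set.InjOn f T₁) (hT₂ : Set.InjOn f T₂) (hT₃ : Set.InjOn f T₃) :
    TPP (S₁ * T₁) (S₂ * T₂) (S₃ * T₃) := by
  intro q₁ hq₁ q₂ hq₂ q₃ hq₃ hq
  obtain ⟨hf₁, hf₂, hf₃⟩ := hT _ (f.map_mem_rightQuotient_image hS₁ hq₁)
    _ (f.map_mem_rightQuotient_image hS₂ hq₂) _ (f.map_mem_rightQuotient_image hS₃ hq₃)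
    (by rw [← map_mul, ← map_mul, hq, map_one])
  exact hS _ (f.mem_rightQuotient_of_map_eq_one hS₁ hT₁ hq₁ hf₁)
    _ (f.mem_rightQuotient_of_map_eq_one hS₂ hT₂ hq₂ hf₂)
    _ (f.mem_rightQuotient_of_map_eq_one hS₃ hT₃ hq₃ hf₃) hq

end MonoidHom

theorem stmt_1 {G : Type*} [Group G] (N : Subgroup G) [N.Normal]
    (S₁ S₂ S₃ T₁ T₂ T₃ : Set G) (n₁ n₂ n₃ m₁ m₂ m₃ : ℕ)
    (hS₁N : S₁ ⊆ (N : Set G)) (hS₂N : S₂ ⊆ (N : Set G)) (hS₃N : S₃ ⊆ (N : Set G))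
    (hS₁f : S₁.Finite) (hS₂f : S₂.Finite) (hS₃f : S₃.Finite)
    (hT₁f : T₁.Finite) (hT₂f : T₂.Finite) (hT₃f : T₃.Finite)
    (hn₁ : S₁.ncard = n₁) (hn₂ : S₂.ncard = n₂) (hn₃ : S₃.ncard = n₃)
    (hm₁ : T₁.ncard = m₁) (hm₂ : T₂.ncard = m₂) (hm₃ : T₃.ncard = m₃)
    (hStpp : TPP S₁ S₂ S₃)
    (hinj₁ : Set.InjOn (QuotientGroup.mk : G → G ⧸ N) T₁)
    (hinj₂ : Set.InjOn (QuotientGroup.mk : G → G ⧸ N) T₂)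
    (hinj₃ : Set.InjOn (QuotientGroup.mk : G → G ⧸ N) T₃)
    (hTtpp : TPP ((QuotientGroup.mk : G → G ⧸ N) '' T₁)
      ((QuotientGroup.mk : G → G ⧸ N) '' T₂) ((QuotientGroup.mk : G → G ⧸ N) '' T₃)) :
    TPP (S₁ * T₁) (S₂ * T₂) (S₃ * T₃) ∧
    (S₁ * T₁).ncard = n₁ * m₁ ∧ (S₂ * T₂).ncard = n₂ * m₂ ∧ (S₃ * T₃).ncard = n₃ * m₃ ∧
    Realizes G (n₁ * m₁) (n₂ * m₂) (n₃ * m₃) := by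
  set π := QuotientGroup.mk' N
  rw [← QuotientGroup.ker_mk' N] at hS₁N hS₂N hS₃N
  have htpp := π.tpp_mul hStpp hTtpp hS₁N hS₂N hS₃N hinj₁ hinj₂ hinj₃
  have hc₁ : (S₁ * T₁).ncard = n₁ * m₁ := by rw [π.ncard_mul hS₁N hinj₁, hn₁, hm₁]
  have hc₂ : (S₂ * T₂).ncard = n₂ * m₂ := by rw [π.ncard_mul hS₂N hinj₂, hn₂, hm₂]
  have hc₃ : (S₃ * T₃).ncard = n₃ * m₃ := by rw [π.ncard_mul hS₃N hinj₃, hn₃, hm₃]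
  exact ⟨htpp, hc₁, hc₂, hc₃, S₁ * T₁, S₂ * T₂, S₃ * T₃,
    hS₁f.mul hT₁f, hS₂f.mul hT₂f, hS₃f.mul hT₃f, hc₁, hc₂, hc₃, htpp⟩
end

section
/- Let F be a field, G a group, and S, T, U finite subsets of G satisfying the triple product property. Let A : S × T → F and B : T × U → F be arbitrary. In the group algebra F[G], consider the elements Ā = Σ_{s∈S, t∈T} A(s,t)·(s⁻¹t) and B̄ = Σ_{t'∈T, u∈U} B(t',u)·(t'⁻¹u). Then for every s ∈ S and u ∈ U, the coefficient of the group element s⁻¹u in the product Ā·B̄ equals Σ_{t∈T} A(s,t)·B(t,u). -/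
/-! Expanding the product, the coefficient of `s⁻¹u` collects the terms `s'⁻¹t · t'⁻¹u'` equal
to `s⁻¹u`. Such an equation rearranges to `(s s'⁻¹)(t t'⁻¹)(u' u⁻¹) = 1`, so the triple product
property forces `s' = s`, `t = t'`, `u' = u`, leaving exactly the terms `A(s,t) B(t,u)`. -/

theorem TPP.mul_eq_iff {G : Type*} [Group G] {S T U : Set G} (htpp : TPP S T U)
    {s s' t t' u u' : G} (hs : s ∈ S) (hs' : s' ∈ S) (ht : t ∈ T) (ht' : t' ∈ T)
    (hu : u ∈ U) (hu' : u' ∈ U) :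
    s'⁻¹ * t * (t'⁻¹ * u') = s⁻¹ * u ↔ s' = s ∧ t = t' ∧ u' = u := by
  refine ⟨fun h => ?_, by rintro ⟨rfl, rfl, rfl⟩; group⟩
  have hquot : (s * s'⁻¹) * (t * t'⁻¹) * (u' * u⁻¹) = 1 := by
    calc (s * s'⁻¹) * (t * t'⁻¹) * (u' * u⁻¹) = s * (s'⁻¹ * t * (t'⁻¹ * u')) * u⁻¹ := by group
      _ = 1 := by rw [h]; group
  obtain ⟨hs₁, ht₁, hu₁⟩ := htpp _ ⟨s, hs, s', hs', rfl⟩ _ ⟨t, ht, t', ht', rfl⟩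
    _ ⟨u', hu', u, hu, rfl⟩ hquot
  exact ⟨(mul_inv_eq_one.mp hs₁).symm, mul_inv_eq_one.mp ht₁, mul_inv_eq_one.mp hu₁⟩

theorem stmt_2 {F : Type*} [Field F] {G : Type*} [Group G]
    (S T U : Finset G) (htpp : TPP (S : Set G) (T : Set G) (U : Set G))
    (A B : G → G → F) (s : G) (hs : s ∈ S) (u : G) (hu : u ∈ U) :
    (((∑ s' ∈ S, ∑ t ∈ T, MonoidAlgebra.single (s'⁻¹ * t) (A s' t)) *
        (∑ t' ∈ T, ∑ u' ∈ U, MonoidAlgebra.single (t'⁻¹ * u') (B t' u'))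
      : MonoidAlgebra F G)).coeff (s⁻¹ * u) = ∑ t ∈ T, A s t * B t u := by
  classical
  simp only [Finset.sum_mul, Finset.mul_sum, MonoidAlgebra.single_mul_single,
    MonoidAlgebra.coeff_sum, Finset.sum_apply', MonoidAlgebra.coeff_single, Finsupp.single_apply]
  refine Finset.sum_congr rfl fun t' ht' => ?_
  calc _ = ∑ u' ∈ U, ∑ s' ∈ S, ∑ t ∈ T,
          if s' = s ∧ t = t' ∧ u' = u then A s' t * B t' u' else 0 :=
        Finset.sum_congr rfl fun u' hu' => Finset.sum_congr rfl fun s' hs' =>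
          Finset.sum_congr rfl fun t ht => if_congr (htpp.mul_eq_iff hs hs' ht ht' hu hu') rfl rfl
    _ = A s t' * B t' u := by simp [ite_and, hs, ht', hu]
end

section
/- Let G be an abelian group and let S₁, S₂, S₃ be finite subsets of G satisfying the triple product property. Then the product map S₁ × S₂ × S₃ → G, (s₁, s₂, s₃) ↦ s₁s₂s₃, is injective; in particular, if G is finite then |G| ≥ |S₁|·|S₂|·|S₃|. (Hence every abelian group has pseudo-exponent exactly 3.) -/
theorem stmt_4 {G : Type*} [CommGroup G] (S₁ S₂ S₃ : Set G) (hf₁ : S₁.Finite)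
    (hf₂ : S₂.Finite) (hf₃ : S₃.Finite) (htpp : TPP S₁ S₂ S₃) :
    (∀ s₁ ∈ S₁, ∀ s₂ ∈ S₂, ∀ s₃ ∈ S₃, ∀ t₁ ∈ S₁, ∀ t₂ ∈ S₂, ∀ t₃ ∈ S₃,
      s₁ * s₂ * s₃ = t₁ * t₂ * t₃ → s₁ = t₁ ∧ s₂ = t₂ ∧ s₃ = t₃) ∧
    (∀ (inst : Fintype G), S₁.ncard * S₂.ncard * S₃.ncard ≤ @Fintype.card G inst) := by
  have hinj : ∀ s₁ ∈ S₁, ∀ s₂ ∈ S₂, ∀ s₃ ∈ S₃, ∀ t₁ ∈ S₁, ∀ t₂ ∈ S₂, ∀ t₃ ∈ S₃,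
      s₁ * s₂ * s₃ = t₁ * t₂ * t₃ → s₁ = t₁ ∧ s₂ = t₂ ∧ s₃ = t₃ := by
    intro s₁ hs₁ s₂ hs₂ s₃ hs₃ t₁ ht₁ t₂ ht₂ t₃ ht₃ h
    have hq : (s₁ * t₁⁻¹) * (s₂ * t₂⁻¹) * (s₃ * t₃⁻¹) = 1 := by
      have : (s₁ * s₂ * s₃) * (t₁ * t₂ * t₃)⁻¹ = 1 := by
        rw [h, mul_inv_cancel]
      calc (s₁ * t₁⁻¹) * (s₂ * t₂⁻¹) * (s₃ * t₃⁻¹)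
          = (s₁ * s₂ * s₃) * (t₁ * t₂ * t₃)⁻¹ := by
            simp [mul_comm, mul_assoc, mul_left_comm]
        _ = 1 := this
    obtain ⟨h1, h2, h3⟩ := htpp _ ⟨s₁, hs₁, t₁, ht₁, rfl⟩ _ ⟨s₂, hs₂, t₂, ht₂, rfl⟩
      _ ⟨s₃, hs₃, t₃, ht₃, rfl⟩ hq
    refine ⟨?_, ?_, ?_⟩ <;>
      [exact mul_inv_eq_one.mp h1; exact mul_inv_eq_one.mp h2; exact mul_inv_eq_one.mp h3]
  refine ⟨hinj, fun inst => ?_⟩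
  have : Finite G := Finite.of_fintype G
  have hcard : Nat.card (↥S₁ × ↥S₂ × ↥S₃) ≤ Nat.card G := by
    apply Nat.card_le_card_of_injective
      (f := fun p : ↥S₁ × ↥S₂ × ↥S₃ => (p.1 : G) * p.2.1 * p.2.2)
    rintro ⟨⟨a1, ha1⟩, ⟨a2, ha2⟩, ⟨a3, ha3⟩⟩ ⟨⟨b1, hb1⟩, ⟨b2, hb2⟩, ⟨b3, hb3⟩⟩ h
    obtain ⟨e1, e2, e3⟩ := hinj a1 ha1 a2 ha2 a3 ha3 b1 hb1 b2 hb2 b3 hb3 h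
    simp_all
  simpa [Nat.card_prod, Nat.card_coe_set_eq, Nat.card_eq_fintype_card, mul_assoc]
    using hcard
end

section
/- Fix n ≥ 1 and let X = {(a,b,c) ∈ ℕ³ : a + b + c = n − 1}, a set of n(n+1)/2 points. Let G be the group of all permutations of X, and for i = 1, 2, 3 let Hᵢ = {π ∈ G : the i-th coordinate of π(t) equals the i-th coordinate of t for all t ∈ X}. Then H₁, H₂, H₃ are subgroups satisfying the triple product property, and |Hᵢ| = 1!·2!···n! for each i. Consequently, the symmetric group on n(n+1)/2 points realizes ⟨N, N, N⟩ with N = ∏_{k=1}^{n} k!. -/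
/-- The triangular array of points `{(a,b,c) ∈ ℕ³ : a + b + c = n − 1}`. -/
def Tri (n : ℕ) : Type := {t : ℕ × ℕ × ℕ // t.1 + t.2.1 + t.2.2 = n - 1}

/-- The subgroup (as a set) of permutations of the triangular array preserving
the first coordinate. -/
def triH₁ (n : ℕ) : Set (Equiv.Perm (Tri n)) := {π | ∀ t : Tri n, (π t).val.1 = t.val.1}

/-- Permutations preserving the second coordinate. -/
def triH₂ (n : ℕ) : Set (Equiv.Perm (Tri n)) := {π | ∀ t : Tri n, (π t).val.2.1 = t.val.2.1}

/-- Permutations preserving the third coordinate. -/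
def triH₃ (n : ℕ) : Set (Equiv.Perm (Tri n)) := {π | ∀ t : Tri n, (π t).val.2.2 = t.val.2.2}

/-!
Since `a + b + c = n - 1`, two coordinates determine a point. If `h₁ h₂ h₃ = 1`, then `h₃` fixes
every point: a point moved by `h₃` that is minimal for `(b + c, c)` in the lexicographic order
would produce a smaller moved point. Then `h₂ = h₁⁻¹` preserves the first two coordinates, so it is
trivial. The order of `Hᵢ` is `∏ₖ (n - k)!`, as `Hᵢ` permutes each line `{aᵢ = k}` of `n - k`
points independently.
-/

open Equiv

theorem rightQuotient_coe_subgroup {G : Type*} [Group G] (K : Subgroup G) :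
    rightQuotient (K : Set G) = K := by
  ext g
  constructor
  · rintro ⟨s₁, h₁, s₂, h₂, rfl⟩
    exact mul_mem h₁ (inv_mem h₂)
  · intro hg
    exact ⟨g, hg, 1, K.one_mem, by rw [inv_one, mul_one]⟩

theorem tpp_coe_subgroups_iff {G : Type*} [Group G] (K₁ K₂ K₃ : Subgroup G) :
    TPP (K₁ : Set G) K₂ K₃ ↔ ∀ h₁ ∈ K₁, ∀ h₂ ∈ K₂, ∀ h₃ ∈ K₃,
      h₁ * h₂ * h₃ = 1 → h₁ = 1 ∧ h₂ = 1 ∧ h₃ = 1 := by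
  simp only [TPP, rightQuotient_coe_subgroup, SetLike.mem_coe]

theorem rightQuotient_image {G G' : Type*} [Group G] [Group G'] (φ : G →* G') (S : Set G) :
    rightQuotient (φ '' S) = φ '' rightQuotient S := by
  ext g
  constructor
  · rintro ⟨_, ⟨a, ha, rfl⟩, _, ⟨b, hb, rfl⟩, rfl⟩
    exact ⟨a * b⁻¹, ⟨a, ha, b, hb, rfl⟩, by simp⟩
  · rintro ⟨_, ⟨a, ha, b, hb, rfl⟩, rfl⟩
    exact ⟨φ a, ⟨a, ha, rfl⟩, φ b, ⟨b, hb, rfl⟩, by simp⟩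

theorem TPP.image {G G' : Type*} [Group G] [Group G'] {φ : G →* G'}
    (hφ : Function.Injective φ) {S₁ S₂ S₃ : Set G} (h : TPP S₁ S₂ S₃) :
    TPP (φ '' S₁) (φ '' S₂) (φ '' S₃) := by
  rintro _ hq₁ _ hq₂ _ hq₃ hmul
  rw [rightQuotient_image] at hq₁ hq₂ hq₃
  obtain ⟨q₁, hq₁, rfl⟩ := hq₁
  obtain ⟨q₂, hq₂, rfl⟩ := hq₂
  obtain ⟨q₃, hq₃, rfl⟩ := hq₃
  rw [← map_mul, ← map_mul, ← map_one φ] at hmul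
  obtain ⟨rfl, rfl, rfl⟩ := h q₁ hq₁ q₂ hq₂ q₃ hq₃ (hφ hmul)
  simp

theorem Realizes.of_injective {G G' : Type*} [Group G] [Group G'] {φ : G →* G'}
    (hφ : Function.Injective φ) {n₁ n₂ n₃ : ℕ} (h : Realizes G n₁ n₂ n₃) :
    Realizes G' n₁ n₂ n₃ := by
  obtain ⟨S₁, S₂, S₃, hS₁, hS₂, hS₃, rfl, rfl, rfl, hS⟩ := h
  exact ⟨φ '' S₁, φ '' S₂, φ '' S₃, hS₁.image _, hS₂.image _, hS₃.image _,
    Set.ncard_image_of_injective _ hφ, Set.ncard_image_of_injective _ hφ,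
    Set.ncard_image_of_injective _ hφ, hS.image hφ⟩

@[to_additive]
theorem Fin.prod_univ_sub_eq_prod_Icc {M : Type*} [CommMonoid M] (f : ℕ → M) (n : ℕ) :
    ∏ i : Fin n, f (n - i) = ∏ k ∈ Finset.Icc 1 n, f k := by
  induction n with
  | zero => simp
  | succ n ih =>
    rw [Fin.prod_univ_succ, Finset.prod_Icc_succ_top (by omega), ← ih, mul_comm]
    simp

theorem Finset.sum_Icc_one_id (n : ℕ) : ∑ k ∈ Finset.Icc 1 n, k = n * (n + 1) / 2 := by
  have := Finset.sum_range_id (n + 1)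
  rw [Finset.range_eq_Ico, Finset.sum_eq_sum_Ico_succ_bot (by omega),
    Finset.Ico_add_one_right_eq_Icc] at this
  simpa [mul_comm] using this

def fiberPreserving {α β : Type*} (f : α → β) : Subgroup (Perm α) where
  carrier := {π | ∀ t, f (π t) = f t}
  one_mem' _ := rfl
  mul_mem' ha hb t := (ha _).trans (hb t)
  inv_mem' {π} hπ t := by simpa using (hπ (π⁻¹ t)).symm

namespace Tri

variable {n : ℕ}

theorem ext_fst_snd {x y : Tri n} (h₁ : x.val.1 = y.val.1) (h₂ : x.val.2.1 = y.val.2.1) :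
    x = y := by
  have hx := x.2
  have hy := y.2
  exact Subtype.ext (Prod.ext h₁ (Prod.ext h₂ (by omega)))

theorem ext_snd_thd {x y : Tri n} (h₂ : x.val.2.1 = y.val.2.1) (h₃ : x.val.2.2 = y.val.2.2) :
    x = y := by
  have hx := x.2
  have hy := y.2
  exact Subtype.ext (Prod.ext (by omega) (Prod.ext h₂ h₃))

def rotate (n : ℕ) : Tri n ≃ Tri n where
  toFun t := ⟨(t.val.2.1, t.val.2.2, t.val.1), by have := t.2; dsimp only; omega⟩
  invFun t := ⟨(t.val.2.2, t.val.1, t.val.2.1), by have := t.2; dsimp only; omega⟩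
  left_inv _ := rfl
  right_inv _ := rfl

instance : Finite (Tri n) :=
  Finite.of_injective (fun t : Tri n => ((⟨t.val.1, by have := t.2; omega⟩ : Fin (n + 1)),
    (⟨t.val.2.1, by have := t.2; omega⟩ : Fin (n + 1))))
    fun _ _ h => ext_fst_snd (congrArg (·.1.val) h) (congrArg (·.2.val) h)

def fstFin (hn : 1 ≤ n) (t : Tri n) : Fin n := ⟨t.val.1, by have := t.2; omega⟩

theorem card_fstFin_fiber (hn : 1 ≤ n) (i : Fin n) :
    Nat.card {t : Tri n // fstFin hn t = i} = n - i := by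
  rw [← Nat.card_fin (n - i)]
  exact Nat.card_congr
    { toFun t := ⟨t.1.val.2.1, by
        have := t.1.2
        have : t.1.val.1 = i := congrArg Fin.val t.2
        omega⟩
      invFun j := ⟨⟨(i, j, n - 1 - i - j), by have := j.2; dsimp only; omega⟩, rfl⟩
      left_inv t := Subtype.ext (ext_fst_snd (congrArg Fin.val t.2).symm rfl)
      right_inv _ := rfl }

theorem natCard (hn : 1 ≤ n) : Nat.card (Tri n) = n * (n + 1) / 2 := by
  rw [Nat.card_congr (Equiv.sigmaFiberEquiv (fstFin hn)).symm, Nat.card_sigma]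
  simp only [card_fstFin_fiber]
  rw [Fin.sum_univ_sub_eq_sum_Icc (fun k => k), Finset.sum_Icc_one_id]

/- For `e = Equiv.refl _`, `rotate n` and `(rotate n).symm` the set below is, definitionally,
`triH₁ n`, `triH₂ n` and `triH₃ n`. -/
theorem ncard_perm_preserving_fst_comp (hn : 1 ≤ n) (e : Tri n ≃ Tri n) :
    {π : Perm (Tri n) | ∀ t, (e (π t)).val.1 = (e t).val.1}.ncard =
      ∏ k ∈ Finset.Icc 1 n, k.factorial := by
  have hset : {π : Perm (Tri n) | ∀ t, (e (π t)).val.1 = (e t).val.1} =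
      {π : Perm (Tri n) | (fstFin hn ∘ e) ∘ π = fstFin hn ∘ e} := by
    ext π
    simp [funext_iff, fstFin, Fin.ext_iff]
  rw [hset, DomMulAct.stabilizer_ncard, ← Fin.prod_univ_sub_eq_prod_Icc]
  refine Fintype.prod_congr _ _ fun i => ?_
  rw [← card_fstFin_fiber hn i, ← Nat.card_coe_set_eq]
  exact congrArg _ (Nat.card_congr (e.subtypeEquiv fun _ => Iff.rfl))

theorem coe_fiberPreserving_fst :
    (fiberPreserving fun t : Tri n => t.val.1 : Set (Perm (Tri n))) = triH₁ n := rfl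

theorem coe_fiberPreserving_snd :
    (fiberPreserving fun t : Tri n => t.val.2.1 : Set (Perm (Tri n))) = triH₂ n := rfl

theorem coe_fiberPreserving_thd :
    (fiberPreserving fun t : Tri n => t.val.2.2 : Set (Perm (Tri n))) = triH₃ n := rfl

theorem eq_one_of_mem_triH₁_of_mem_triH₂ {σ : Perm (Tri n)} (h₁ : σ ∈ triH₁ n)
    (h₂ : σ ∈ triH₂ n) : σ = 1 :=
  Equiv.ext fun t => ext_fst_snd (h₁ t) (h₂ t)

/- If `σ₃` lowers `b` at `x`, then `σ₃ x` is smaller than `x`, hence fixed, so `σ₃ x = x`. If it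
raises `b`, then `z = σ₂ σ₃ x` has the `a` of `x` and a larger `b`, hence is smaller than `x`;
then `σ₃ z = z` forces `σ₂ σ₃ z = z`, so `z = x`, which is absurd. -/
theorem eq_one_of_mul_mem_triH₁ {σ₂ σ₃ : Perm (Tri n)} (h₂ : σ₂ ∈ triH₂ n)
    (h₃ : σ₃ ∈ triH₃ n) (h₁ : σ₂ * σ₃ ∈ triH₁ n) : σ₃ = 1 := by
  ext1 x
  induction x using (InvImage.wf (fun x : Tri n => toLex (x.val.2.1 + x.val.2.2, x.val.2.2))
    wellFounded_lt).induction with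
  | _ x ih =>
  have hc := h₃ x
  rcases lt_trichotomy (σ₃ x).val.2.1 x.val.2.1 with hlt | heq | hgt
  · have hfix := ih (σ₃ x) (Prod.Lex.toLex_lt_toLex.mpr (Or.inl (by omega)))
    exact σ₃.injective hfix
  · exact ext_snd_thd heq hc
  · set z := (σ₂ * σ₃) x
    have hza : z.val.1 = x.val.1 := h₁ x
    have hzb : z.val.2.1 = (σ₃ x).val.2.1 := h₂ (σ₃ x)
    have hz_lt : toLex (z.val.2.1 + z.val.2.2, z.val.2.2) <
        toLex (x.val.2.1 + x.val.2.2, x.val.2.2) := by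
      have := z.2
      have := x.2
      exact Prod.Lex.toLex_lt_toLex.mpr (Or.inr ⟨by omega, by omega⟩)
    have hσ₃z : σ₃ z = z := ih z hz_lt
    have hzfix : (σ₂ * σ₃) z = z := by
      refine ext_fst_snd (h₁ z) ?_
      change (σ₂ (σ₃ z)).val.2.1 = _
      rw [hσ₃z]
      exact h₂ z
    have hzx : z = x := (σ₂ * σ₃).injective hzfix
    rw [hzx] at hzb
    omega

theorem tpp (n : ℕ) : TPP (triH₁ n) (triH₂ n) (triH₃ n) := by
  rw [← coe_fiberPreserving_fst, ← coe_fiberPreserving_snd, ← coe_fiberPreserving_thd,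
    tpp_coe_subgroups_iff]
  intro σ₁ h₁ σ₂ h₂ σ₃ h₃ h
  have h₂₃ : σ₂ * σ₃ = σ₁⁻¹ := eq_inv_of_mul_eq_one_right (by rwa [← mul_assoc])
  obtain rfl : σ₃ = 1 := eq_one_of_mul_mem_triH₁ h₂ h₃ (h₂₃ ▸ inv_mem h₁)
  rw [mul_one] at h h₂₃
  obtain rfl : σ₂ = 1 := eq_one_of_mem_triH₁_of_mem_triH₂ (h₂₃ ▸ inv_mem h₁) h₂
  exact ⟨by simpa using h, rfl, rfl⟩

theorem realizes_perm (hn : 1 ≤ n) :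
    Realizes (Perm (Tri n)) (∏ k ∈ Finset.Icc 1 n, k.factorial)
      (∏ k ∈ Finset.Icc 1 n, k.factorial) (∏ k ∈ Finset.Icc 1 n, k.factorial) :=
  ⟨triH₁ n, triH₂ n, triH₃ n, Set.toFinite _, Set.toFinite _, Set.toFinite _,
    ncard_perm_preserving_fst_comp hn (Equiv.refl _),
    ncard_perm_preserving_fst_comp hn (rotate n),
    ncard_perm_preserving_fst_comp hn (rotate n).symm, tpp n⟩

end Tri

theorem stmt_5 (n : ℕ) (hn : 1 ≤ n) :
    Nat.card (Tri n) = n * (n + 1) / 2 ∧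
    (∃ K₁ K₂ K₃ : Subgroup (Equiv.Perm (Tri n)),
      (K₁ : Set (Equiv.Perm (Tri n))) = triH₁ n ∧
      (K₂ : Set (Equiv.Perm (Tri n))) = triH₂ n ∧
      (K₃ : Set (Equiv.Perm (Tri n))) = triH₃ n) ∧
    TPP (triH₁ n) (triH₂ n) (triH₃ n) ∧
    (triH₁ n).ncard = ∏ k ∈ Finset.Icc 1 n, (Nat.factorial k) ∧
    (triH₂ n).ncard = ∏ k ∈ Finset.Icc 1 n, (Nat.factorial k) ∧
    (triH₃ n).ncard = ∏ k ∈ Finset.Icc 1 n, (Nat.factorial k) ∧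
    Realizes (Equiv.Perm (Fin (n * (n + 1) / 2)))
      (∏ k ∈ Finset.Icc 1 n, (Nat.factorial k)) (∏ k ∈ Finset.Icc 1 n, (Nat.factorial k)) (∏ k ∈ Finset.Icc 1 n, (Nat.factorial k)) := by
  let e : Tri n ≃ Fin (n * (n + 1) / 2) := Finite.equivFinOfCardEq (Tri.natCard hn)
  exact ⟨Tri.natCard hn,
    ⟨_, _, _, Tri.coe_fiberPreserving_fst, Tri.coe_fiberPreserving_snd,
      Tri.coe_fiberPreserving_thd⟩,
    Tri.tpp n,
    Tri.ncard_perm_preserving_fst_comp hn (Equiv.refl _),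
    Tri.ncard_perm_preserving_fst_comp hn (Tri.rotate n),
    Tri.ncard_perm_preserving_fst_comp hn (Tri.rotate n).symm,
    (Tri.realizes_perm hn).of_injective (φ := e.permCongrHom.toMonoidHom)
      e.permCongrHom.injective⟩
end

section
/- Let n ≥ 1, and let M, A, B be n×n real matrices such that M is orthogonal with determinant 1 (MᵀM = I and det M = 1), A is upper triangular with all diagonal entries equal to 1 (A_{ij} = 0 for i > j, A_{ii} = 1), and B is lower triangular with all diagonal entries equal to 1 (B_{ij} = 0 for i < j, B_{ii} = 1). If MA = B, then M = A = B = I. (Thus the subgroups SO_n(ℝ), the unipotent upper-triangular group, and the unipotent lower-triangular group of SL_n(ℝ) satisfy the triple product property, so SL_n(ℝ) has Lie pseudo-exponent at most 2 + 2/n.) -/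
open Matrix

lemma aux_sq_sum {n : ℕ} (x : Fin n → ℝ) (i : Fin n)
    (hsum : ∑ j, x j * x j = 1) (hxi : x i = 1) :
    ∀ j, j ≠ i → x j = 0 := by
  have herase : ∑ j ∈ Finset.univ.erase i, x j * x j = 0 := by
    have := Finset.sum_erase_add Finset.univ (fun j => x j * x j) (Finset.mem_univ i)
    simp only [hxi, mul_one] at this
    nlinarith [this, hsum]
  intro j hj
  have hz := (Finset.sum_eq_zero_iff_of_nonneg (fun k _ => mul_self_nonneg (x k))).1 herase j
    (Finset.mem_erase.2 ⟨hj, Finset.mem_univ j⟩)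
  exact mul_self_eq_zero.1 hz

theorem stmt_9 (n : ℕ) (hn : 1 ≤ n) (M A B : Matrix (Fin n) (Fin n) ℝ)
    (hMorth : Mᵀ * M = 1) (hMdet : M.det = 1)
    (hAupper : ∀ i j : Fin n, j < i → A i j = 0) (hAdiag : ∀ i : Fin n, A i i = 1)
    (hBlower : ∀ i j : Fin n, i < j → B i j = 0) (hBdiag : ∀ i : Fin n, B i i = 1)
    (h : M * A = B) : M = 1 ∧ A = 1 ∧ B = 1 := by
  have hMM : M * Mᵀ = 1 := by rwa [mul_eq_one_comm] at hMorth
  have key : ∀ m : ℕ, ∀ i : Fin n, (i : ℕ) = m →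
      (∀ j, M i j = if i = j then 1 else 0) ∧ (∀ j, M j i = if j = i then 1 else 0) ∧
      (∀ j, A i j = if i = j then 1 else 0) ∧ (∀ j, B i j = if i = j then 1 else 0) := by
    intro m
    induction m using Nat.strong_induction_on with
    | _ m IH =>
      intro i him
      have IH' : ∀ i' : Fin n, i' < i →
          (∀ j, M i' j = if i' = j then 1 else 0) ∧
          (∀ j, M j i' = if j = i' then 1 else 0) ∧
          (∀ j, A i' j = if i' = j then 1 else 0) ∧
          (∀ j, B i' j = if i' = j then 1 else 0) := by
        intro i' hi'
        exact IH i'.val (by omega) i' rfl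
      -- Step 1: column i of M equals column i of B
      have hcol : ∀ j, M j i = B j i := by
        intro j
        have hB : B j i = ∑ k, M j k * A k i := by rw [← h, Matrix.mul_apply]
        rw [hB, Finset.sum_eq_single i]
        · rw [hAdiag, mul_one]
        · intro k _ hk
          rcases lt_or_gt_of_ne hk with hlt | hgt
          · rw [(IH' k hlt).2.2.1 i, if_neg hk, mul_zero]
          · rw [hAupper k i hgt, mul_zero]
        · intro hi; exact absurd (Finset.mem_univ i) hi
      have hMii : M i i = 1 := by rw [hcol, hBdiag]
      -- column i of M is e_i
      have hcolnorm : ∑ j, M j i * M j i = 1 := by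
        have := congrFun (congrFun hMorth i) i
        simpa [Matrix.mul_apply, Matrix.transpose_apply, Matrix.one_apply] using this
      have hcolzero : ∀ j, j ≠ i → M j i = 0 :=
        aux_sq_sum (fun j => M j i) i hcolnorm hMii
      -- row i of M is e_i
      have hrownorm : ∑ j, M i j * M i j = 1 := by
        have := congrFun (congrFun hMM i) i
        simpa [Matrix.mul_apply, Matrix.transpose_apply, Matrix.one_apply] using this
      have hrowzero : ∀ j, j ≠ i → M i j = 0 :=
        aux_sq_sum (fun j => M i j) i hrownorm hMii
      -- row i of B equals row i of A
      have hrowAB : ∀ j, B i j = A i j := by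
        intro j
        have hB : B i j = ∑ k, M i k * A k j := by rw [← h, Matrix.mul_apply]
        rw [hB, Finset.sum_eq_single i]
        · rw [hMii, one_mul]
        · intro k _ hk
          rw [hrowzero k hk, zero_mul]
        · intro hi; exact absurd (Finset.mem_univ i) hi
      have hArow : ∀ j, A i j = if i = j then 1 else 0 := by
        intro j
        rcases lt_trichotomy j i with hlt | heq | hgt
        · rw [hAupper i j hlt, if_neg (by exact fun hc => absurd hc.symm (ne_of_lt hlt))]
        · subst heq; rw [hAdiag, if_pos rfl]
        · rw [← hrowAB, hBlower i j hgt, if_neg (ne_of_lt hgt)]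
      refine ⟨?_, ?_, hArow, ?_⟩
      · intro j
        by_cases hij : i = j
        · subst hij; rw [hMii, if_pos rfl]
        · rw [hrowzero j (fun hc => hij hc.symm), if_neg hij]
      · intro j
        by_cases hij : j = i
        · subst hij; rw [hMii, if_pos rfl]
        · rw [hcolzero j hij, if_neg hij]
      · intro j; rw [hrowAB, hArow]
  refine ⟨?_, ?_, ?_⟩ <;> ext i j
  · rw [(key i.val i rfl).1 j, Matrix.one_apply]
  · rw [(key i.val i rfl).2.2.1 j, Matrix.one_apply]
  · rw [(key i.val i rfl).2.2.2 j, Matrix.one_apply]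
end

section
/- Let F be a field, n ≥ 1, and let B : Fⁿ × Fⁿ → F be a symmetric bilinear form that is anisotropic, i.e., B(z, z) = 0 implies z = 0. Define a group G on the set Fⁿ × Fⁿ × F with multiplication (x, y, α)(u, v, β) = (x + u, y + v, α + β + 2·B(u, y)). Then the three subgroups H₁ = {(x, 0, 0) : x ∈ Fⁿ}, H₂ = {(0, y, 0) : y ∈ Fⁿ}, and H₃ = {(z, z, B(z, z)) : z ∈ Fⁿ} satisfy the triple product property in G. -/
/-- The underlying set `Fⁿ × Fⁿ × F` of the Heisenberg-type group determined by a
bilinear form `B`. -/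
@[ext]
structure Heis (F : Type*) (n : ℕ) where
  x : Fin n → F
  y : Fin n → F
  z : F

namespace Heis

variable {F : Type*} [Field F] {n : ℕ}

/-- Multiplication `(x, y, α)(u, v, β) = (x + u, y + v, α + β + 2·B(u, y))`. -/
def hmul (B : (Fin n → F) →ₗ[F] (Fin n → F) →ₗ[F] F) (p q : Heis F n) : Heis F n :=
  ⟨p.x + q.x, p.y + q.y, p.z + q.z + 2 * B q.x p.y⟩

/-- Inversion `(x, y, α)⁻¹ = (−x, −y, −α + 2·B(x, y))`. -/
def hinv (B : (Fin n → F) →ₗ[F] (Fin n → F) →ₗ[F] F) (p : Heis F n) : Heis F n :=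
  ⟨-p.x, -p.y, -p.z + 2 * B p.x p.y⟩

lemma hmul_assoc (B : (Fin n → F) →ₗ[F] (Fin n → F) →ₗ[F] F) (p q r : Heis F n) :
    hmul B (hmul B p q) r = hmul B p (hmul B q r) := by
  simp only [hmul, Heis.mk.injEq]
  refine ⟨add_assoc _ _ _, add_assoc _ _ _, ?_⟩
  simp only [map_add, LinearMap.add_apply]
  ring

lemma one_hmul (B : (Fin n → F) →ₗ[F] (Fin n → F) →ₗ[F] F) (p : Heis F n) :
    hmul B ⟨0, 0, 0⟩ p = p := by
  simp only [hmul, map_zero]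
  ext <;> simp

lemma hmul_one (B : (Fin n → F) →ₗ[F] (Fin n → F) →ₗ[F] F) (p : Heis F n) :
    hmul B p ⟨0, 0, 0⟩ = p := by
  simp only [hmul, map_zero, LinearMap.zero_apply]
  ext <;> simp

lemma hinv_hmul (B : (Fin n → F) →ₗ[F] (Fin n → F) →ₗ[F] F) (p : Heis F n) :
    hmul B (hinv B p) p = ⟨0, 0, 0⟩ := by
  simp only [hmul, hinv, Heis.mk.injEq]
  refine ⟨by simp, by simp, ?_⟩
  simp only [map_neg, LinearMap.neg_apply]
  ring

/-- The group structure on `Fⁿ × Fⁿ × F` with multiplication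
`(x, y, α)(u, v, β) = (x + u, y + v, α + β + 2·B(u, y))`. -/
def heisGroup (B : (Fin n → F) →ₗ[F] (Fin n → F) →ₗ[F] F) : Group (Heis F n) where
  mul := hmul B
  one := ⟨0, 0, 0⟩
  inv := hinv B
  mul_assoc := hmul_assoc B
  one_mul := one_hmul B
  mul_one := hmul_one B
  inv_mul_cancel := hinv_hmul B

end Heis

theorem stmt_10 (F : Type*) [Field F] (n : ℕ) (hn : 1 ≤ n)
    (B : (Fin n → F) →ₗ[F] (Fin n → F) →ₗ[F] F)
    (hsymm : ∀ x y : Fin n → F, B x y = B y x)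
    (haniso : ∀ z : Fin n → F, B z z = 0 → z = 0) :
    (∃ K₁ K₂ K₃ : @Subgroup (Heis F n) (Heis.heisGroup B),
      (K₁ : Set (Heis F n)) = {p : Heis F n | ∃ x : Fin n → F, p = ⟨x, 0, 0⟩} ∧
      (K₂ : Set (Heis F n)) = {p : Heis F n | ∃ y : Fin n → F, p = ⟨0, y, 0⟩} ∧
      (K₃ : Set (Heis F n)) = {p : Heis F n | ∃ z : Fin n → F, p = ⟨z, z, B z z⟩}) ∧
    @TPP (Heis F n) (Heis.heisGroup B)
      {p : Heis F n | ∃ x : Fin n → F, p = ⟨x, 0, 0⟩}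
      {p : Heis F n | ∃ y : Fin n → F, p = ⟨0, y, 0⟩}
      {p : Heis F n | ∃ z : Fin n → F, p = ⟨z, z, B z z⟩} := by
  letI : Group (Heis F n) := Heis.heisGroup B
  have hmul_eq : ∀ p q : Heis F n, p * q = Heis.hmul B p q := fun _ _ => rfl
  have hinv_eq : ∀ p : Heis F n, p⁻¹ = Heis.hinv B p := fun _ => rfl
  have hone : (1 : Heis F n) = ⟨0, 0, 0⟩ := rfl
  constructor
  · refine ⟨{ carrier := {p | ∃ x, p = ⟨x, 0, 0⟩}
              mul_mem' := ?_, one_mem' := ⟨0, by simp [hone]⟩, inv_mem' := ?_ },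
            { carrier := {p | ∃ y, p = ⟨0, y, 0⟩}
              mul_mem' := ?_, one_mem' := ⟨0, by simp [hone]⟩, inv_mem' := ?_ },
            { carrier := {p | ∃ z, p = ⟨z, z, B z z⟩}
              mul_mem' := ?_, one_mem' := ⟨0, by simp [hone]⟩, inv_mem' := ?_ },
            rfl, rfl, rfl⟩
    · rintro p q ⟨a, rfl⟩ ⟨b, rfl⟩
      exact ⟨a + b, by simp [hmul_eq, Heis.hmul]⟩
    · rintro p ⟨a, rfl⟩
      exact ⟨-a, by simp [hinv_eq, Heis.hinv]⟩
    · rintro p q ⟨a, rfl⟩ ⟨b, rfl⟩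
      exact ⟨a + b, by simp [hmul_eq, Heis.hmul]⟩
    · rintro p ⟨a, rfl⟩
      exact ⟨-a, by simp [hinv_eq, Heis.hinv]⟩
    · rintro p q ⟨a, rfl⟩ ⟨b, rfl⟩
      refine ⟨a + b, ?_⟩
      simp only [hmul_eq, Heis.hmul, Heis.mk.injEq, map_add, LinearMap.add_apply]
      refine ⟨trivial, trivial, ?_⟩
      rw [hsymm a b]; ring
    · rintro p ⟨a, rfl⟩
      refine ⟨-a, ?_⟩
      simp only [hinv_eq, Heis.hinv, Heis.mk.injEq, map_neg, LinearMap.neg_apply]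
      exact ⟨trivial, trivial, by ring⟩
  · rintro q₁ ⟨s₁, ⟨a, rfl⟩, s₂, ⟨b, rfl⟩, rfl⟩
      q₂ ⟨t₁, ⟨c, rfl⟩, t₂, ⟨d, rfl⟩, rfl⟩
      q₃ ⟨u₁, ⟨z, rfl⟩, u₂, ⟨w, rfl⟩, rfl⟩ heq
    have heq' := heq
    rw [hone] at heq'
    simp only [hmul_eq, hinv_eq, Heis.hmul, Heis.hinv, Heis.mk.injEq,
      map_zero, map_neg, map_add, map_sub, LinearMap.neg_apply, LinearMap.add_apply,
      LinearMap.sub_apply, LinearMap.zero_apply, LinearMap.map_zero] at heq'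
    obtain ⟨h1, h2, h3⟩ := heq'
    have hc : c = d + w - z := by linear_combination h2
    rw [hc] at h3
    simp only [map_add, map_sub, LinearMap.add_apply, LinearMap.sub_apply] at h3
    have hBe : B (z - w) (z - w) = 0 := by
      simp only [map_sub, LinearMap.sub_apply]
      linear_combination -h3 + hsymm z w
    have hzw : z = w := sub_eq_zero.mp (haniso _ hBe)
    have hab : a = b := by linear_combination h1 - hzw
    have hcd : c = d := by linear_combination h2 - hzw
    subst hab hcd hzw
    exact ⟨mul_inv_cancel _, mul_inv_cancel _, mul_inv_cancel _⟩
end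

section
/- Let q be an odd prime power, F a finite field with q elements, and w ∈ F a non-square. Define the symmetric bilinear form B on F² by B(x, y) = x₁y₁ − w·x₂y₂, and let G be the group on F² × F² × F with multiplication (x, y, α)(u, v, β) = (x + u, y + v, α + β + 2·B(u, y)). Then G has order q⁵, the subgroups H₁ = {(x, 0, 0)}, H₂ = {(0, y, 0)}, H₃ = {(z, z, B(z, z))} each have order q² and satisfy the triple product property, and hence G realizes ⟨q², q², q²⟩ (so its pseudo-exponent is at most 2.5). -/
/-- The symmetric bilinear form `B(x, y) = x₁y₁ − w·x₂y₂` on `F²`. -/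
def Bform (F : Type*) [Field F] (w : F) : (Fin 2 → F) →ₗ[F] (Fin 2 → F) →ₗ[F] F :=
  LinearMap.mk₂ F (fun x y => x 0 * y 0 - w * (x 1 * y 1))
    (by intros m₁ m₂ n; simp only [Pi.add_apply]; ring)
    (by intros c m n; simp only [Pi.smul_apply, smul_eq_mul]; ring)
    (by intros m n₁ n₂; simp only [Pi.add_apply]; ring)
    (by intros c m n; simp only [Pi.smul_apply, smul_eq_mul]; ring)


section Aux

variable {F : Type*} [Field F]

/-- Equivalence with the product type, for counting. -/
def heisEquiv (F : Type*) (n : ℕ) : Heis F n ≃ (Fin n → F) × (Fin n → F) × F where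
  toFun p := (p.x, p.y, p.z)
  invFun t := ⟨t.1, t.2.1, t.2.2⟩
  left_inv p := rfl
  right_inv t := rfl

lemma Bform_apply (w : F) (x y : Fin 2 → F) :
    Bform F w x y = x 0 * y 0 - w * (x 1 * y 1) := rfl

lemma nonsquare_anisotropic {w : F} (hw : ∀ u : F, u ^ 2 ≠ w) (c : Fin 2 → F)
    (h : Bform F w c c = 0) : c = 0 := by
  rw [Bform_apply] at h
  have h1 : c 1 = 0 := by
    by_contra hc1
    refine hw (c 0 / c 1) ?_
    field_simp
    linear_combination h
  have h0 : c 0 = 0 := by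
    have h2 : c 0 * c 0 = 0 := by linear_combination h + (w * c 1) * h1
    exact mul_self_eq_zero.mp h2
  funext i
  fin_cases i <;> simp [h0, h1]

end Aux


section Aux2

variable {F : Type*} [Field F] (w : F)

lemma quot1 {p q : Heis F 2} (hp : ∃ x : Fin 2 → F, p = ⟨x, 0, 0⟩)
    (hq : ∃ x : Fin 2 → F, q = ⟨x, 0, 0⟩) :
    ∃ a : Fin 2 → F, Heis.hmul (Bform F w) p (Heis.hinv (Bform F w) q) = ⟨a, 0, 0⟩ := by
  obtain ⟨x₁, rfl⟩ := hp; obtain ⟨x₂, rfl⟩ := hq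
  refine ⟨x₁ + -x₂, ?_⟩
  simp [Heis.hmul, Heis.hinv, Bform_apply]

lemma quot2 {p q : Heis F 2} (hp : ∃ y : Fin 2 → F, p = ⟨0, y, 0⟩)
    (hq : ∃ y : Fin 2 → F, q = ⟨0, y, 0⟩) :
    ∃ b : Fin 2 → F, Heis.hmul (Bform F w) p (Heis.hinv (Bform F w) q) = ⟨0, b, 0⟩ := by
  obtain ⟨y₁, rfl⟩ := hp; obtain ⟨y₂, rfl⟩ := hq
  refine ⟨y₁ + -y₂, ?_⟩
  simp [Heis.hmul, Heis.hinv, Bform_apply]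

lemma quot3 {p q : Heis F 2}
    (hp : ∃ z : Fin 2 → F, p = ⟨z, z, Bform F w z z⟩)
    (hq : ∃ z : Fin 2 → F, q = ⟨z, z, Bform F w z z⟩) :
    ∃ c : Fin 2 → F, Heis.hmul (Bform F w) p (Heis.hinv (Bform F w) q)
      = ⟨c, c, Bform F w c c⟩ := by
  obtain ⟨z, rfl⟩ := hp; obtain ⟨t, rfl⟩ := hq
  refine ⟨z + -t, ?_⟩
  simp only [Heis.hmul, Heis.hinv, Heis.mk.injEq, Bform_apply, Pi.add_apply, Pi.neg_apply]
  refine ⟨trivial, trivial, by ring⟩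

lemma tripleprod (a b c : Fin 2 → F) :
    Heis.hmul (Bform F w) (Heis.hmul (Bform F w) ⟨a, 0, 0⟩ ⟨0, b, 0⟩) ⟨c, c, Bform F w c c⟩
      = ⟨a + c, b + c, Bform F w c c + 2 * Bform F w c b⟩ := by
  simp only [Heis.hmul, Heis.mk.injEq, Bform_apply, Pi.add_apply, Pi.zero_apply]
  refine ⟨by simp, by simp, by ring⟩

lemma tpp_main (hw : ∀ u : F, u ^ 2 ≠ w) :
    @TPP (Heis F 2) (Heis.heisGroup (Bform F w))
      {p : Heis F 2 | ∃ x : Fin 2 → F, p = ⟨x, 0, 0⟩}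
      {p : Heis F 2 | ∃ y : Fin 2 → F, p = ⟨0, y, 0⟩}
      {p : Heis F 2 | ∃ z : Fin 2 → F, p = ⟨z, z, Bform F w z z⟩} := by
  letI : Group (Heis F 2) := Heis.heisGroup (Bform F w)
  rintro q₁ ⟨s₁, hs₁, s₂, hs₂, rfl⟩ q₂ ⟨t₁, ht₁, t₂, ht₂, rfl⟩ q₃ ⟨u₁, hu₁, u₂, hu₂, rfl⟩ hprod
  obtain ⟨a, ha⟩ := quot1 w hs₁ hs₂
  obtain ⟨b, hb⟩ := quot2 w ht₁ ht₂
  obtain ⟨c, hc⟩ := quot3 w hu₁ hu₂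
  have ha' : s₁ * s₂⁻¹ = (⟨a, 0, 0⟩ : Heis F 2) := ha
  have hb' : t₁ * t₂⁻¹ = (⟨0, b, 0⟩ : Heis F 2) := hb
  have hc' : u₁ * u₂⁻¹ = (⟨c, c, Bform F w c c⟩ : Heis F 2) := hc
  rw [ha', hb', hc'] at hprod ⊢
  have hprod' : (⟨a + c, b + c, Bform F w c c + 2 * Bform F w c b⟩ : Heis F 2)
      = ⟨0, 0, 0⟩ := by
    rw [← tripleprod w a b c]; exact hprod
  rw [Heis.mk.injEq] at hprod'
  obtain ⟨hac, hbc, hz⟩ := hprod'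
  have hb0 : b 0 + c 0 = 0 := congrFun hbc 0
  have hb1 : b 1 + c 1 = 0 := congrFun hbc 1
  have hBcc : Bform F w c c = 0 := by
    rw [Bform_apply]
    rw [Bform_apply, Bform_apply] at hz
    linear_combination (-1 : F) * hz + 2 * c 0 * hb0 - 2 * w * c 1 * hb1
  have hc0 : c = 0 := nonsquare_anisotropic hw c hBcc
  have ha0 : a = 0 := by rw [hc0, add_zero] at hac; exact hac
  have hb0' : b = 0 := by rw [hc0, add_zero] at hbc; exact hbc
  subst hc0 ha0 hb0'
  refine ⟨rfl, rfl, ?_⟩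
  show (⟨(0 : Fin 2 → F), 0, Bform F w 0 0⟩ : Heis F 2) = (1 : Heis F 2)
  show (⟨(0 : Fin 2 → F), 0, Bform F w 0 0⟩ : Heis F 2) = ⟨0, 0, 0⟩
  simp

end Aux2

theorem stmt_11 (F : Type*) [Field F] [Fintype F] (q : ℕ) (hq : Fintype.card F = q)
    (hodd : Odd q) (w : F) (hw : ∀ u : F, u ^ 2 ≠ w) :
    Nat.card (Heis F 2) = q ^ 5 ∧
    {p : Heis F 2 | ∃ x : Fin 2 → F, p = ⟨x, 0, 0⟩}.ncard = q ^ 2 ∧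
    {p : Heis F 2 | ∃ y : Fin 2 → F, p = ⟨0, y, 0⟩}.ncard = q ^ 2 ∧
    {p : Heis F 2 | ∃ z : Fin 2 → F, p = ⟨z, z, Bform F w z z⟩}.ncard = q ^ 2 ∧
    (∃ K₁ K₂ K₃ : @Subgroup (Heis F 2) (Heis.heisGroup (Bform F w)),
      (K₁ : Set (Heis F 2)) = {p : Heis F 2 | ∃ x : Fin 2 → F, p = ⟨x, 0, 0⟩} ∧
      (K₂ : Set (Heis F 2)) = {p : Heis F 2 | ∃ y : Fin 2 → F, p = ⟨0, y, 0⟩} ∧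
      (K₃ : Set (Heis F 2)) = {p : Heis F 2 | ∃ z : Fin 2 → F, p = ⟨z, z, Bform F w z z⟩}) ∧
    @TPP (Heis F 2) (Heis.heisGroup (Bform F w))
      {p : Heis F 2 | ∃ x : Fin 2 → F, p = ⟨x, 0, 0⟩}
      {p : Heis F 2 | ∃ y : Fin 2 → F, p = ⟨0, y, 0⟩}
      {p : Heis F 2 | ∃ z : Fin 2 → F, p = ⟨z, z, Bform F w z z⟩} ∧
    @Realizes (Heis F 2) (Heis.heisGroup (Bform F w)) (q ^ 2) (q ^ 2) (q ^ 2) := by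
  classical
  letI : Group (Heis F 2) := Heis.heisGroup (Bform F w)
  letI : Fintype (Heis F 2) := Fintype.ofEquiv _ (heisEquiv F 2).symm
  have hcardF2 : Fintype.card (Fin 2 → F) = q ^ 2 := by
    rw [Fintype.card_fun, hq, Fintype.card_fin]
  have hcardG : Nat.card (Heis F 2) = q ^ 5 := by
    rw [Nat.card_congr (heisEquiv F 2), Nat.card_eq_fintype_card, Fintype.card_prod,
      Fintype.card_prod, hcardF2, hq]
    ring
  -- cardinalities of the three sets
  have hS1 : {p : Heis F 2 | ∃ x : Fin 2 → F, p = ⟨x, 0, 0⟩}.ncard = q ^ 2 := by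
    have hinj : Function.Injective (fun x : Fin 2 → F => (⟨x, 0, 0⟩ : Heis F 2)) :=
      fun a b h => congrArg Heis.x h
    have hset : {p : Heis F 2 | ∃ x : Fin 2 → F, p = ⟨x, 0, 0⟩}
        = Set.range (fun x : Fin 2 → F => (⟨x, 0, 0⟩ : Heis F 2)) := by
      ext p; exact ⟨fun ⟨x, h⟩ => ⟨x, h.symm⟩, fun ⟨x, h⟩ => ⟨x, h.symm⟩⟩
    rw [hset, ← Set.image_univ, Set.ncard_image_of_injective _ hinj, Set.ncard_univ,
      Nat.card_eq_fintype_card, hcardF2]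
  have hS2 : {p : Heis F 2 | ∃ y : Fin 2 → F, p = ⟨0, y, 0⟩}.ncard = q ^ 2 := by
    have hinj : Function.Injective (fun y : Fin 2 → F => (⟨0, y, 0⟩ : Heis F 2)) :=
      fun a b h => congrArg Heis.y h
    have hset : {p : Heis F 2 | ∃ y : Fin 2 → F, p = ⟨0, y, 0⟩}
        = Set.range (fun y : Fin 2 → F => (⟨0, y, 0⟩ : Heis F 2)) := by
      ext p; exact ⟨fun ⟨x, h⟩ => ⟨x, h.symm⟩, fun ⟨x, h⟩ => ⟨x, h.symm⟩⟩
    rw [hset, ← Set.image_univ, Set.ncard_image_of_injective _ hinj, Set.ncard_univ,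
      Nat.card_eq_fintype_card, hcardF2]
  have hS3 : {p : Heis F 2 | ∃ z : Fin 2 → F, p = ⟨z, z, Bform F w z z⟩}.ncard = q ^ 2 := by
    have hinj : Function.Injective
        (fun z : Fin 2 → F => (⟨z, z, Bform F w z z⟩ : Heis F 2)) :=
      fun a b h => congrArg Heis.x h
    have hset : {p : Heis F 2 | ∃ z : Fin 2 → F, p = ⟨z, z, Bform F w z z⟩}
        = Set.range (fun z : Fin 2 → F => (⟨z, z, Bform F w z z⟩ : Heis F 2)) := by
      ext p; exact ⟨fun ⟨x, h⟩ => ⟨x, h.symm⟩, fun ⟨x, h⟩ => ⟨x, h.symm⟩⟩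
    rw [hset, ← Set.image_univ, Set.ncard_image_of_injective _ hinj, Set.ncard_univ,
      Nat.card_eq_fintype_card, hcardF2]
  -- subgroups
  have hK : ∃ K₁ K₂ K₃ : @Subgroup (Heis F 2) (Heis.heisGroup (Bform F w)),
      (K₁ : Set (Heis F 2)) = {p : Heis F 2 | ∃ x : Fin 2 → F, p = ⟨x, 0, 0⟩} ∧
      (K₂ : Set (Heis F 2)) = {p : Heis F 2 | ∃ y : Fin 2 → F, p = ⟨0, y, 0⟩} ∧
      (K₃ : Set (Heis F 2)) = {p : Heis F 2 | ∃ z : Fin 2 → F, p = ⟨z, z, Bform F w z z⟩} := by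
    refine ⟨⟨⟨⟨{p : Heis F 2 | ∃ x : Fin 2 → F, p = ⟨x, 0, 0⟩}, ?_⟩, ?_⟩, ?_⟩,
      ⟨⟨⟨{p : Heis F 2 | ∃ y : Fin 2 → F, p = ⟨0, y, 0⟩}, ?_⟩, ?_⟩, ?_⟩,
      ⟨⟨⟨{p : Heis F 2 | ∃ z : Fin 2 → F, p = ⟨z, z, Bform F w z z⟩}, ?_⟩, ?_⟩, ?_⟩,
      rfl, rfl, rfl⟩
    · rintro p r ⟨x₁, rfl⟩ ⟨x₂, rfl⟩
      refine ⟨x₁ + x₂, ?_⟩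
      show Heis.hmul (Bform F w) _ _ = _
      simp [Heis.hmul, Bform_apply]
    · exact ⟨0, rfl⟩
    · rintro p ⟨x₁, rfl⟩
      refine ⟨-x₁, ?_⟩
      show Heis.hinv (Bform F w) _ = _
      simp [Heis.hinv, Bform_apply]
    · rintro p r ⟨y₁, rfl⟩ ⟨y₂, rfl⟩
      refine ⟨y₁ + y₂, ?_⟩
      show Heis.hmul (Bform F w) _ _ = _
      simp [Heis.hmul, Bform_apply]
    · exact ⟨0, rfl⟩
    · rintro p ⟨y₁, rfl⟩
      refine ⟨-y₁, ?_⟩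
      show Heis.hinv (Bform F w) _ = _
      simp [Heis.hinv, Bform_apply]
    · rintro p r ⟨z₁, rfl⟩ ⟨z₂, rfl⟩
      refine ⟨z₁ + z₂, ?_⟩
      show Heis.hmul (Bform F w) _ _ = _
      simp only [Heis.hmul, Heis.mk.injEq, Bform_apply, Pi.add_apply]
      refine ⟨trivial, trivial, by ring⟩
    · refine ⟨0, ?_⟩
      show (1 : Heis F 2) = _
      show (⟨0, 0, 0⟩ : Heis F 2) = _
      simp [Bform_apply]
    · rintro p ⟨z₁, rfl⟩
      refine ⟨-z₁, ?_⟩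
      show Heis.hinv (Bform F w) _ = _
      simp only [Heis.hinv, Heis.mk.injEq, Bform_apply, Pi.neg_apply]
      refine ⟨trivial, trivial, by ring⟩
  have htpp := tpp_main w hw
  refine ⟨hcardG, hS1, hS2, hS3, hK, htpp, ?_⟩
  exact ⟨_, _, _, Set.toFinite _, Set.toFinite _, Set.toFinite _, hS1, hS2, hS3, htpp⟩
end

section
/- Let m ≥ 2 and let k ≥ 1 be a multiple of m − 1. Let S be the set of all vectors in (ℤ/mℤ)^k in which each of the residues 0, 1, …, m−2 occurs in exactly k/(m−1) coordinates (so the residue m−1 occurs in no coordinate). Then no two distinct vectors of S differ by an element of {0, 1}^k: if u, v ∈ S and u − v ∈ {0, 1}^k (with 0 and 1 the images of the integers 0 and 1 in ℤ/mℤ), then u = v. -/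
lemma stmt_19_aux (m k : ℕ) (hm : 2 ≤ m) (hdvd : (m - 1) ∣ k)
    (w : Fin k → ZMod m)
    (hw : ∀ j : ℕ, j < m - 1 →
      (Finset.univ.filter fun i : Fin k => w i = (j : ZMod m)).card = k / (m - 1)) :
    (∀ i, (w i).val < m - 1) ∧
      ∑ i, (w i).val = ∑ j ∈ Finset.range (m - 1), j * (k / (m - 1)) := by
  haveI : NeZero m := ⟨by omega⟩
  set P : Finset (Fin k) :=
    (Finset.range (m - 1)).biUnion (fun j => Finset.univ.filter fun i => w i = (j : ZMod m))
    with hP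
  have hdisj : ∀ j₁ ∈ Finset.range (m - 1), ∀ j₂ ∈ Finset.range (m - 1), j₁ ≠ j₂ →
      Disjoint (Finset.univ.filter fun i : Fin k => w i = (j₁ : ZMod m))
        (Finset.univ.filter fun i : Fin k => w i = (j₂ : ZMod m)) := by
    intro j₁ h₁ j₂ h₂ hne
    simp only [Finset.mem_range] at h₁ h₂
    rw [Finset.disjoint_filter]
    intro i _ e₁ e₂
    apply hne
    have : ((j₁ : ZMod m)).val = ((j₂ : ZMod m)).val := by rw [← e₁, ← e₂]
    rwa [ZMod.val_natCast_of_lt (by omega), ZMod.val_natCast_of_lt (by omega)] at this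
  have hcard : P.card = k := by
    rw [hP, Finset.card_biUnion hdisj]
    have : ∀ j ∈ Finset.range (m - 1),
        (Finset.univ.filter fun i : Fin k => w i = (j : ZMod m)).card = k / (m - 1) := by
      intro j hj; exact hw j (Finset.mem_range.mp hj)
    rw [Finset.sum_congr rfl this, Finset.sum_const, Finset.card_range, smul_eq_mul]
    exact Nat.mul_div_cancel' hdvd
  have hPuniv : P = Finset.univ := by
    apply Finset.eq_univ_of_card
    rw [hcard, Fintype.card_fin]
  have hmem : ∀ i : Fin k, ∃ j < m - 1, w i = (j : ZMod m) := by
    intro i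
    have : i ∈ P := hPuniv ▸ Finset.mem_univ i
    rw [hP, Finset.mem_biUnion] at this
    obtain ⟨j, hj, hi⟩ := this
    exact ⟨j, Finset.mem_range.mp hj, (Finset.mem_filter.mp hi).2⟩
  constructor
  · intro i
    obtain ⟨j, hj, hij⟩ := hmem i
    rw [hij, ZMod.val_natCast_of_lt (by omega)]
    exact hj
  · rw [show (Finset.univ : Finset (Fin k)) = P from hPuniv.symm, hP,
      Finset.sum_biUnion hdisj]
    apply Finset.sum_congr rfl
    intro j hj
    have hjm : j < m - 1 := Finset.mem_range.mp hj
    have : ∀ i ∈ (Finset.univ.filter fun i : Fin k => w i = (j : ZMod m)),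
        (w i).val = j := by
      intro i hi
      rw [(Finset.mem_filter.mp hi).2, ZMod.val_natCast_of_lt (by omega)]
    rw [Finset.sum_congr rfl this, Finset.sum_const, smul_eq_mul, hw j hjm, Nat.mul_comm]

theorem stmt_19 (m k : ℕ) (hm : 2 ≤ m) (hk : 1 ≤ k) (hdvd : (m - 1) ∣ k)
    (u v : Fin k → ZMod m)
    (hu : ∀ j : ℕ, j < m - 1 →
      (Finset.univ.filter fun i : Fin k => u i = (j : ZMod m)).card = k / (m - 1))
    (hv : ∀ j : ℕ, j < m - 1 →
      (Finset.univ.filter fun i : Fin k => v i = (j : ZMod m)).card = k / (m - 1))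
    (hdiff : ∀ i : Fin k, u i - v i = 0 ∨ u i - v i = 1) :
    u = v := by
  haveI : NeZero m := ⟨by omega⟩
  obtain ⟨hub, hus⟩ := stmt_19_aux m k hm hdvd u hu
  obtain ⟨hvb, hvs⟩ := stmt_19_aux m k hm hdvd v hv
  set D : Finset (Fin k) := Finset.univ.filter fun i => u i - v i = 1 with hD
  have hval : ∀ i : Fin k, (u i).val = (v i).val + (if i ∈ D then 1 else 0) := by
    intro i
    by_cases hi : i ∈ D
    · simp only [hi, if_pos]
      have h1 : u i = v i + 1 := by
        have := (Finset.mem_filter.mp hi).2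
        linear_combination this
      rw [h1, ZMod.val_add, ZMod.val_one_eq_one_mod]
      have hvi := hvb i
      have : (1 : ℕ) % m = 1 := Nat.mod_eq_of_lt (by omega)
      rw [this]
      exact Nat.mod_eq_of_lt (by omega)
    · rw [if_neg hi, Nat.add_zero]
      have h0 : u i - v i = 0 := by
        rcases hdiff i with h | h
        · exact h
        · exact absurd (Finset.mem_filter.mpr ⟨Finset.mem_univ i, h⟩) hi
      rw [sub_eq_zero] at h0
      rw [h0]
  have hsum : ∑ i, (u i).val = ∑ i, (v i).val + D.card := by
    rw [Finset.sum_congr rfl (fun i _ => hval i), Finset.sum_add_distrib,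
      Finset.sum_ite_mem, Finset.univ_inter, Finset.sum_const, smul_eq_mul, Nat.mul_one]
  have hD0 : D.card = 0 := by omega
  have hDempty : D = ∅ := Finset.card_eq_zero.mp hD0
  funext i
  rcases hdiff i with h | h
  · exact sub_eq_zero.mp h
  · have : i ∈ D := Finset.mem_filter.mpr ⟨Finset.mem_univ i, h⟩
    rw [hDempty] at this
    exact absurd this (Finset.notMem_empty i)
end
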